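/- Let A, B be n×n positive semidefinite complex matrices and let t ∈ (1/2, 1). Set B_t = A^t B^(1-t) + B^t A^(1-t) and F_t = B^(1-t) A^(2t-1) B^(1-t) + A^(1-t) B^(2t-1) A^(1-t). Then the 2n×2n block matrix with blocks [[A + B, B_t], [B_t*, F_t]] is positive semidefinite, where B_t* denotes the conjugate transpose of B_t. -/

import Mathlib

/-! With `u = (A^(1/2); B^(1-t) A^(t-1/2))` stacked as a `2n × n` matrix, the Gram matrix `u uᴴ`
is `[[A, A^t B^(1-t)], [*, B^(1-t) A^(2t-1) B^(1-t)]]`, because powers of `A` multiply by adding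
exponents as long as these are nonnegative, i.e. `t ≥ 1/2`. The block matrix of the theorem is
`u uᴴ + v vᴴ`, where `v` is `u` with `A` and `B` exchanged. -/

open scoped ComplexOrder Matrix

noncomputable def matRpow {n : ℕ} (A : Matrix (Fin n) (Fin n) ℂ) (r : ℝ) :
    Matrix (Fin n) (Fin n) ℂ :=
  cfc (fun x : ℝ => x ^ r) A

namespace Matrix

theorem posSemidef_fromBlocks_mul_conjTranspose {m₁ m₂ k R : Type*} [Fintype m₁]
    [Fintype m₂] [Fintype k] [Ring R] [PartialOrder R] [StarRing R] [StarOrderedRing R]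
    (P : Matrix m₁ k R) (Q : Matrix m₂ k R) :
    (fromBlocks (P * Pᴴ) (P * Qᴴ) (P * Qᴴ)ᴴ (Q * Qᴴ)).PosSemidef := by
  have hgram : fromRows P Q * (fromRows P Q)ᴴ
      = fromBlocks (P * Pᴴ) (P * Qᴴ) (P * Qᴴ)ᴴ (Q * Qᴴ) := by
    rw [conjTranspose_fromRows_eq_fromCols_conjTranspose, fromRows_mul_fromCols,
      conjTranspose_mul, conjTranspose_conjTranspose]
  exact hgram ▸ posSemidef_self_mul_conjTranspose _

end Matrix

section matRpow

open Matrix MatrixOrder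

variable {n : ℕ} {A : Matrix (Fin n) (Fin n) ℂ}

theorem matRpow_conjTranspose (A : Matrix (Fin n) (Fin n) ℂ) (r : ℝ) :
    (matRpow A r)ᴴ = matRpow A r :=
  (cfc_predicate (fun x : ℝ => x ^ r) A : IsSelfAdjoint (matRpow A r))

theorem matRpow_mul_matRpow (hA : A.PosSemidef) {r s : ℝ} (hr : 0 ≤ r) (hs : 0 ≤ s) :
    matRpow A r * matRpow A s = matRpow A (r + s) := by
  rw [matRpow, matRpow, matRpow, ← cfc_mul _ _ A]
  refine cfc_congr fun x hx => (Real.rpow_add_of_nonneg ?_ hr hs).symm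
  exact spectrum_nonneg_of_nonneg hA.nonneg hx

theorem matRpow_one (hA : A.PosSemidef) : matRpow A 1 = A := by
  simp only [matRpow, Real.rpow_one]
  exact cfc_id' ℝ A hA.isHermitian

theorem posSemidef_fromBlocks_matRpow (hA : A.PosSemidef) (B : Matrix (Fin n) (Fin n) ℂ)
    {t : ℝ} (ht : 1 / 2 ≤ t) :
    (fromBlocks A (matRpow A t * matRpow B (1 - t)) (matRpow A t * matRpow B (1 - t))ᴴ
      (matRpow B (1 - t) * matRpow A (2 * t - 1) * matRpow B (1 - t))).PosSemidef := by
  set P := matRpow A (1 / 2)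
  set Q := matRpow B (1 - t) * matRpow A (t - 1 / 2)
  have ht' : 0 ≤ t - 1 / 2 := by linarith
  have hP : P * Pᴴ = A := by
    rw [matRpow_conjTranspose, matRpow_mul_matRpow hA (by norm_num) (by norm_num)]
    norm_num [matRpow_one hA]
  have hPQ : P * Qᴴ = matRpow A t * matRpow B (1 - t) := by
    rw [conjTranspose_mul, matRpow_conjTranspose, matRpow_conjTranspose, ← mul_assoc,
      matRpow_mul_matRpow hA (by norm_num) ht', add_sub_cancel]
  have hQ : Q * Qᴴ = matRpow B (1 - t) * matRpow A (2 * t - 1) * matRpow B (1 - t) := by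
    rw [conjTranspose_mul, matRpow_conjTranspose, matRpow_conjTranspose, mul_assoc,
      ← mul_assoc (matRpow A _), matRpow_mul_matRpow hA ht' ht', ← mul_assoc]
    ring_nf
  have hgram := posSemidef_fromBlocks_mul_conjTranspose P Q
  rwa [hP, hPQ, hQ] at hgram

end matRpow

theorem block_matrix_posSemidef {n : ℕ} (A B : Matrix (Fin n) (Fin n) ℂ)
    (hA : A.PosSemidef) (hB : B.PosSemidef) (t : ℝ)
    (ht : t ∈ Set.Ioo (1 / 2 : ℝ) 1) :
    (Matrix.fromBlocks (A + B)
      (matRpow A t * matRpow B (1 - t) + matRpow B t * matRpow A (1 - t))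
      (matRpow A t * matRpow B (1 - t) + matRpow B t * matRpow A (1 - t))ᴴ
      (matRpow B (1 - t) * matRpow A (2 * t - 1) * matRpow B (1 - t) +
        matRpow A (1 - t) * matRpow B (2 * t - 1) * matRpow A (1 - t))).PosSemidef := by
  have hsum := (posSemidef_fromBlocks_matRpow hA B ht.1.le).add
    (posSemidef_fromBlocks_matRpow hB A ht.1.le)
  rwa [Matrix.fromBlocks_add, ← Matrix.conjTranspose_add] at hsum
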